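/- Let n ≥ 1 and let 0 ≤ i_1 < i_2 < … < i_n < s be integers. Then ∫ (P_{2^{i_1}} + r_{i_1}/2)(P_{2^{i_2}} + r_{i_2}/2)⋯(P_{2^{i_n}} + r_{i_n}/2) dν_s = 0. -/
import Mathlib

open Polynomial

/-- `r γ s` : the recursively defined scales `r 0 = 1`, `r (s+1) = γ (s+1) * (r s)²`. -/
noncomputable def r (γ : ℕ → ℝ) : ℕ → ℝ
  | 0 => 1
  | s + 1 => γ (s + 1) * (r γ s) ^ 2

/-- `P γ s` : the polynomial `P_{2^s}`, with `P_1 = X - 1` and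
`P_{2^{s+1}} = P_{2^s} · (P_{2^s} + r_s)`. -/
noncomputable def P (γ : ℕ → ℝ) : ℕ → Polynomial ℝ
  | 0 => X - 1
  | s + 1 => P γ s * (P γ s + C (r γ s))

/-- The integral `∫ f dν_s` of a function `f` against the normalized counting measure `ν_s`
on the `2^s` (simple, real) zeros of `P_{2^s} + r_s/2`. -/
noncomputable def nuInt (γ : ℕ → ℝ) (s : ℕ) (f : ℝ → ℝ) : ℝ :=
  (((P γ s + C (r γ s / 2)).roots.map f).sum) / 2 ^ s

lemma r_pos (γ : ℕ → ℝ) (hγ : ∀ s : ℕ, 0 < γ (s + 1)) : ∀ s, 0 < r γ s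
  | 0 => one_pos
  | s + 1 => mul_pos (hγ s) (pow_pos (r_pos γ hγ s) 2)

lemma P_monic_deg (γ : ℕ → ℝ) : ∀ s, (P γ s).Monic ∧ (P γ s).natDegree = 2 ^ s := by
  intro s
  induction s with
  | zero =>
    constructor
    · have : (P γ 0) = X - C 1 := by simp [P]
      rw [this]; exact monic_X_sub_C 1
    · have : (P γ 0) = X - C 1 := by simp [P]
      rw [this, natDegree_X_sub_C, pow_zero]
  | succ s ih =>
    obtain ⟨hm, hd⟩ := ih
    have hdeg : (P γ s).degree = (2 ^ s : ℕ) := by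
      rw [degree_eq_natDegree hm.ne_zero, hd]
    have hm2 : (P γ s + C (r γ s)).Monic := by
      refine hm.add_of_left ?_
      refine lt_of_le_of_lt degree_C_le ?_
      rw [hdeg]
      exact_mod_cast pow_pos (by norm_num : (0:ℕ) < 2) s
    constructor
    · show (P γ s * (P γ s + C (r γ s))).Monic
      exact hm.mul hm2
    · show (P γ s * (P γ s + C (r γ s))).natDegree = 2 ^ (s + 1)
      rw [hm.natDegree_mul hm2, natDegree_add_C, hd, pow_succ]
      ring

lemma factor (γ : ℕ → ℝ) (s : ℕ) (a b : ℝ) (hab : a + b = r γ s) :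
    P γ (s + 1) + C (a * b) = (P γ s + C a) * (P γ s + C b) := by
  have h : (C (r γ s) : ℝ[X]) = C a + C b := by rw [← map_add, hab]
  show P γ s * (P γ s + C (r γ s)) + C (a * b) = _
  rw [h, map_mul]
  ring

lemma key (γ : ℕ → ℝ) (hγ : ∀ s : ℕ, 0 < γ (s + 1) ∧ γ (s + 1) < 1 / 4) :
    ∀ s : ℕ, ∀ c : ℝ, 0 < c → c < r γ s →
      Multiset.card (P γ s + C c).roots = 2 ^ s ∧
      ∀ n : ℕ, ∀ i : Fin (n + 1) → ℕ, StrictMono i → (∀ k, i k < s) →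
        (((P γ s + C c).roots.map
          (fun x => ∏ k, ((P γ (i k)).eval x + r γ (i k) / 2))).sum) = 0 := by
  intro s
  induction s with
  | zero =>
    intro c _ _
    constructor
    · have : (P γ 0 + C c) = X - C (1 - c) := by
        simp [P]; ring
      rw [this, roots_X_sub_C]
      simp
    · intro n i _ hlt
      exact absurd (hlt 0) (Nat.not_lt_zero _)
  | succ s ih =>
    intro c hc0 hcr
    have hrpos : 0 < r γ s := r_pos γ (fun t => (hγ t).1) s
    have hD : 0 < r γ s ^ 2 / 4 - c := by
      have : c < r γ s ^ 2 / 4 := by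
        calc c < r γ (s + 1) := hcr
          _ = γ (s + 1) * r γ s ^ 2 := rfl
          _ ≤ r γ s ^ 2 / 4 := by nlinarith [(hγ s).2, sq_nonneg (r γ s)]
      linarith
    set t := Real.sqrt (r γ s ^ 2 / 4 - c) with ht
    have ht0 : 0 < t := Real.sqrt_pos.mpr hD
    have ht2 : t ^ 2 = r γ s ^ 2 / 4 - c := Real.sq_sqrt hD.le
    have htlt : t < r γ s / 2 := by
      nlinarith [ht0, hc0]
    set a := r γ s / 2 - t with ha
    set b := r γ s / 2 + t with hb
    have hab : a + b = r γ s := by ring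
    have habc : a * b = c := by
      have : a * b = r γ s ^ 2 / 4 - t ^ 2 := by ring
      rw [this, ht2]; ring
    have ha0 : 0 < a := by simp [ha]; linarith
    have har : a < r γ s := by simp [ha]; nlinarith
    have hb0 : 0 < b := by positivity
    have hbr : b < r γ s := by simp [hb]; linarith
    have hfac : P γ (s + 1) + C c = (P γ s + C a) * (P γ s + C b) := by
      rw [← habc]; exact factor γ s a b hab
    have hmon : ∀ c' : ℝ, (P γ s + C c').Monic := by
      intro c'
      refine (P_monic_deg γ s).1.add_of_left ?_
      refine lt_of_le_of_lt degree_C_le ?_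
      rw [degree_eq_natDegree (P_monic_deg γ s).1.ne_zero, (P_monic_deg γ s).2]
      exact_mod_cast pow_pos (by norm_num : (0:ℕ) < 2) s
    have hroots : (P γ (s + 1) + C c).roots = (P γ s + C a).roots + (P γ s + C b).roots := by
      rw [hfac]
      exact roots_mul (mul_ne_zero (hmon a).ne_zero (hmon b).ne_zero)
    have iha := ih a ha0 har
    have ihb := ih b hb0 hbr
    constructor
    · rw [hroots, Multiset.card_add, iha.1, ihb.1, pow_succ]
      ring
    · intro n i hmono hlt
      rw [hroots, Multiset.map_add, Multiset.sum_add]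
      by_cases hcase : ∀ k, i k < s
      · rw [iha.2 n i hmono hcase, ihb.2 n i hmono hcase]
        ring
      · -- some index equals s; it must be the last one
        push_neg at hcase
        obtain ⟨k0, hk0⟩ := hcase
        have hk0s : i k0 = s := le_antisymm (Nat.lt_succ_iff.mp (hlt k0)) hk0
        have hlast : i (Fin.last n) = s := by
          have h1 : i k0 ≤ i (Fin.last n) := hmono.monotone (Fin.le_last k0)
          have h2 : i (Fin.last n) ≤ s := Nat.lt_succ_iff.mp (hlt (Fin.last n))
          omega
        have hrest : ∀ k : Fin n, i k.castSucc < s := by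
          intro k
          rw [← hlast]
          exact hmono (Fin.castSucc_lt_last k)
        -- the partial product
        set h : ℝ → ℝ := fun x => ∏ k : Fin n, ((P γ (i k.castSucc)).eval x + r γ (i k.castSucc) / 2) with hh
        have hsplit : ∀ c' : ℝ, ∀ x ∈ (P γ s + C c').roots,
            (∏ k : Fin (n+1), ((P γ (i k)).eval x + r γ (i k) / 2))
              = h x * (r γ s / 2 - c') := by
          intro c' x hx
          have hev : (P γ s).eval x = -c' := by
            have := isRoot_of_mem_roots hx
            simp [IsRoot, eval_add, eval_C] at this
            linarith
          simp only [hh]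
          rw [Fin.prod_univ_castSucc, hlast, hev]
          ring
        have hsum : ∀ c' : ℝ, 0 < c' → c' < r γ s →
            (((P γ s + C c').roots.map h).sum)
              = (if n = 0 then (2:ℝ) ^ s else 0) := by
          intro c' h0 h1
          cases n with
          | zero =>
            have h1' : h = fun _ => (1:ℝ) := by funext x; simp [hh]
            rw [h1', Multiset.map_const', Multiset.sum_replicate, (ih c' h0 h1).1]
            simp
          | succ m =>
            simp only [if_neg (Nat.succ_ne_zero m)]
            exact (ih c' h0 h1).2 m (fun k => i k.castSucc)
              (hmono.comp Fin.strictMono_castSucc) hrest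
        have ea : ((P γ s + C a).roots.map
            (fun x => ∏ k : Fin (n+1), ((P γ (i k)).eval x + r γ (i k) / 2))).sum
              = (if n = 0 then (2:ℝ) ^ s else 0) * (r γ s / 2 - a) := by
          rw [Multiset.map_congr rfl (hsplit a), Multiset.sum_map_mul_right,
            hsum a ha0 har]
        have eb : ((P γ s + C b).roots.map
            (fun x => ∏ k : Fin (n+1), ((P γ (i k)).eval x + r γ (i k) / 2))).sum
              = (if n = 0 then (2:ℝ) ^ s else 0) * (r γ s / 2 - b) := by
          rw [Multiset.map_congr rfl (hsplit b), Multiset.sum_map_mul_right,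
            hsum b hb0 hbr]
        rw [ea, eb, ha, hb]
        ring

theorem stmt_3 (γ : ℕ → ℝ) (hγ : ∀ s : ℕ, 0 < γ (s + 1) ∧ γ (s + 1) < 1 / 4)
    (n s : ℕ) (hn : 1 ≤ n) (i : Fin n → ℕ) (hmono : StrictMono i)
    (hlt : ∀ k : Fin n, i k < s) :
    nuInt γ s (fun x => ∏ k : Fin n, ((P γ (i k)).eval x + r γ (i k) / 2)) = 0 := by
  obtain ⟨m, rfl⟩ : ∃ m, n = m + 1 := ⟨n - 1, (Nat.succ_pred_eq_of_pos hn).symm⟩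
  have hrpos : 0 < r γ s := r_pos γ (fun t => (hγ t).1) s
  have := (key γ hγ s (r γ s / 2) (half_pos hrpos) (half_lt_self hrpos)).2 m i hmono hlt
  unfold nuInt
  rw [this]
  simp
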